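/- Let C be a linear code of length n over F_q and 0 ≤ k < e where q = p^e. If C is a k-Galois LCD code, then its k-Galois dual C^{⊥_k} is also a k-Galois LCD code, i.e., C^{⊥_k} ∩ (C^{⊥_k})^{⊥_k} = {0}. -/

import Mathlib

open Finset

/-- The `k`-Galois dual of a linear code `C ⊆ F_q^n`, where `q = p^e`:
`C^{⊥_k} = {x | ∀ c ∈ C, ∑ i, c i * (x i)^(p^k) = 0}`. -/
def galoisDual (p k : ℕ) [Fact p.Prime] {F : Type*} [Field F] [CharP F p] {n : ℕ}
    (C : Submodule F (Fin n → F)) : Submodule F (Fin n → F) where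
  carrier := {x | ∀ c ∈ C, ∑ i, c i * x i ^ p ^ k = 0}
  zero_mem' := fun c _ => by
    simp [zero_pow (pow_pos (Nat.Prime.pos (Fact.out : p.Prime)) k).ne']
  add_mem' := by
    intro x y hx hy c hc
    have hpow : ∀ i : Fin n, (x + y) i ^ p ^ k = x i ^ p ^ k + y i ^ p ^ k := fun i => by
      simpa using add_pow_char_pow (x i) (y i) p k
    calc ∑ i, c i * (x + y) i ^ p ^ k
        = ∑ i, (c i * x i ^ p ^ k + c i * y i ^ p ^ k) := by
          refine Finset.sum_congr rfl fun i _ => by rw [hpow i, mul_add]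
      _ = 0 := by
          rw [Finset.sum_add_distrib, hx c hc, hy c hc, add_zero]
  smul_mem' := by
    intro a x hx c hc
    calc ∑ i, c i * (a • x) i ^ p ^ k
        = a ^ p ^ k * ∑ i, c i * x i ^ p ^ k := by
          rw [Finset.mul_sum]
          refine Finset.sum_congr rfl fun i _ => by
            simp only [Pi.smul_apply, smul_eq_mul, mul_pow]; ring
      _ = 0 := by rw [hx c hc, mul_zero]

/-- A linear code `C` is a `k`-Galois LCD code if `C ∩ C^{⊥_k} = {0}`. -/
def IsGaloisLCD (p k : ℕ) [Fact p.Prime] {F : Type*} [Field F] [CharP F p] {n : ℕ}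
    (C : Submodule F (Fin n → F)) : Prop :=
  C ⊓ galoisDual p k C = ⊥

/-- `C` has minimum Hamming distance `d`. -/
def IsMinDist {F : Type*} [Field F] [DecidableEq F] {n : ℕ}
    (C : Submodule F (Fin n → F)) (d : ℕ) : Prop :=
  (∃ x ∈ C, x ≠ 0 ∧ hammingNorm x = d) ∧ ∀ x ∈ C, x ≠ 0 → d ≤ hammingNorm x

/-- `C` is an MDS code: the trivial code `{0}` counts as MDS, otherwise
the minimum distance is `n - dim C + 1`. -/
def IsMDS {F : Type*} [Field F] [DecidableEq F] {n : ℕ} (C : Submodule F (Fin n → F)) : Prop :=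
  C = ⊥ ∨ IsMinDist C (n - Module.finrank F C + 1)

/-- `C` is `λ`-constacyclic: `(λ c_n, c_1, …, c_{n-1}) ∈ C` whenever `(c_1, …, c_n) ∈ C`. -/
def IsConstacyclic {F : Type*} [Field F] {n : ℕ} (lam : F) (C : Submodule F (Fin n → F)) : Prop :=
  ∀ c ∈ C, (fun i : Fin n => if (i : ℕ) = 0 then lam * c ⟨n - 1, by have := i.isLt; omega⟩
    else c ⟨(i : ℕ) - 1, by have := i.isLt; omega⟩) ∈ C

/-- The Euclidean dual of a linear code. -/
def euclideanDual {F : Type*} [Field F] {n : ℕ}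
    (C : Submodule F (Fin n → F)) : Submodule F (Fin n → F) where
  carrier := {x | ∀ c ∈ C, ∑ i, c i * x i = 0}
  zero_mem' := fun c _ => by simp
  add_mem' := by
    intro x y hx hy c hc
    calc ∑ i, c i * (x + y) i = ∑ i, (c i * x i + c i * y i) := by
          refine Finset.sum_congr rfl fun i _ => by simp [mul_add]
      _ = 0 := by rw [Finset.sum_add_distrib, hx c hc, hy c hc, add_zero]
  smul_mem' := by
    intro a x hx c hc
    calc ∑ i, c i * (a • x) i = a * ∑ i, c i * x i := by
          rw [Finset.mul_sum]
          refine Finset.sum_congr rfl fun i _ => by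
            simp only [Pi.smul_apply, smul_eq_mul]; ring
      _ = 0 := by rw [hx c hc, mul_zero]

/-- The coordinatewise `p^m`-power map `x ↦ (x_i^{p^m})_i`, as a semilinear map
with respect to the iterated Frobenius. -/
def frobPowMap (p m : ℕ) [Fact p.Prime] (F : Type*) [Field F] [CharP F p] (n : ℕ) :
    (Fin n → F) →ₛₗ[iterateFrobenius F p m] (Fin n → F) where
  toFun x := fun i => x i ^ p ^ m
  map_add' x y := funext fun i => by simpa using add_pow_char_pow (x i) (y i) p m
  map_smul' a x := funext fun i => by
    simp [iterateFrobenius_def, mul_pow]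

/-! The `k`-Galois form is the dot product twisted by the coordinatewise `p^k`-th power map, which
is a bijective Frobenius-semilinear map of `F^n` because `F` is perfect. So `C^{⊥_k}` is the
preimage of the Euclidean dual under a semilinear bijection and has dimension `n - dim C`. If `C`
is `k`-Galois LCD this forces `C ⊕ C^{⊥_k} = F^n`, and a vector `k`-Galois orthogonal to both `C`
and `C^{⊥_k}` is orthogonal to all of `F^n`, hence zero. -/

open Module

theorem finrank_comap_of_bijective {R R' V W : Type*} [Semiring R] [Semiring R']
    [AddCommMonoid V] [Module R V] [AddCommMonoid W] [Module R' W]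
    {σ : R →+* R'} (hσ : Function.Bijective σ) {f : V →ₛₗ[σ] W} (hf : Function.Bijective f)
    (U : Submodule R' W) : finrank R (U.comap f) = finrank R' U := by
  let j : U.comap f ≃+ U :=
    { Equiv.ofBijective (fun v : U.comap f => (⟨f v, v.2⟩ : U))
        ⟨fun v w h => Subtype.ext (hf.1 (congrArg Subtype.val h)), fun u =>
          let ⟨v, hv⟩ := hf.2 u; ⟨⟨v, by simp [hv]⟩, Subtype.ext hv⟩⟩ with
      map_add' := fun v w => Subtype.ext (map_add f v.1 w.1) }
  have hrank := lift_rank_eq_of_equiv_equiv σ j hσ fun r v => Subtype.ext (map_smulₛₗ f r v.1)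
  rw [finrank, finrank, ← Cardinal.toNat_lift, hrank, Cardinal.toNat_lift]

theorem euclideanDual_eq_comap_dualAnnihilator {F : Type*} [Field F] {n : ℕ}
    (C : Submodule F (Fin n → F)) :
    euclideanDual C = C.dualAnnihilator.comap (dotProductEquiv F (Fin n)).toLinearMap := by
  ext x
  simp only [Submodule.mem_comap, Submodule.mem_dualAnnihilator, LinearEquiv.coe_coe,
    dotProductEquiv_apply_apply, dotProduct, mul_comm (x _)]
  rfl

theorem finrank_euclideanDual_add_finrank {F : Type*} [Field F] {n : ℕ}
    (C : Submodule F (Fin n → F)) : finrank F (euclideanDual C) + finrank F C = n := by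
  rw [euclideanDual_eq_comap_dualAnnihilator,
    finrank_comap_of_bijective Function.bijective_id (LinearEquiv.bijective _), add_comm,
    Subspace.finrank_add_finrank_dualAnnihilator_eq, finrank_fin_fun]

section GaloisDual

variable (p k : ℕ) [Fact p.Prime] {F : Type*} [Field F] [CharP F p] {n : ℕ}

theorem galoisDual_eq_comap_euclideanDual (C : Submodule F (Fin n → F)) :
    galoisDual p k C = (euclideanDual C).comap (frobPowMap p k F n) :=
  rfl

theorem frobPowMap_injective : Function.Injective (frobPowMap p k F n) :=
  (iterateFrobenius F p k).injective.comp_left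

theorem frobPowMap_bijective [PerfectRing F p] : Function.Bijective (frobPowMap p k F n) :=
  (bijective_iterateFrobenius F p k).comp_left

theorem finrank_galoisDual_add_finrank [PerfectRing F p] (C : Submodule F (Fin n → F)) :
    finrank F (galoisDual p k C) + finrank F C = n := by
  rw [galoisDual_eq_comap_euclideanDual, finrank_comap_of_bijective
    (bijective_iterateFrobenius F p k) (frobPowMap_bijective p k),
    finrank_euclideanDual_add_finrank]

theorem galoisDual_sup (C C' : Submodule F (Fin n → F)) :
    galoisDual p k (C ⊔ C') = galoisDual p k C ⊓ galoisDual p k C' := by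
  simp only [galoisDual_eq_comap_euclideanDual, euclideanDual_eq_comap_dualAnnihilator,
    Submodule.dualAnnihilator_sup_eq, Submodule.comap_inf]

theorem galoisDual_top : galoisDual p k (⊤ : Submodule F (Fin n → F)) = ⊥ := by
  rw [galoisDual_eq_comap_euclideanDual, euclideanDual_eq_comap_dualAnnihilator,
    Submodule.dualAnnihilator_top, Submodule.comap_bot, LinearEquiv.ker, Submodule.comap_bot,
    LinearMap.ker_eq_bot_of_injective (frobPowMap_injective p k)]

variable {p k} in
theorem IsGaloisLCD.isCompl [PerfectRing F p] {C : Submodule F (Fin n → F)}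
    (hC : IsGaloisLCD p k C) :
    IsCompl C (galoisDual p k C) :=
  (Submodule.isCompl_iff_disjoint _ _ (by rw [finrank_fin_fun, add_comm,
    finrank_galoisDual_add_finrank])).2 (disjoint_iff.2 hC)

end GaloisDual

theorem galoisDual_isGaloisLCD_general
    (p k : ℕ) [Fact p.Prime]
    (F : Type*) [Field F] [Fintype F] [CharP F p]
    {n : ℕ} (C : Submodule F (Fin n → F))
    (hC : IsGaloisLCD p k C) :
    galoisDual p k C ⊓ galoisDual p k (galoisDual p k C) = ⊥ := by
  rw [← galoisDual_sup, hC.isCompl.sup_eq_top, galoisDual_top]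

/-- If `C` is a `k`-Galois LCD code, then its `k`-Galois dual `C^{⊥_k}` is also a
`k`-Galois LCD code, i.e. `C^{⊥_k} ∩ (C^{⊥_k})^{⊥_k} = {0}`. -/
theorem galoisDual_isGaloisLCD
    (p e k : ℕ) [Fact p.Prime] (hk : k < e)
    (F : Type*) [Field F] [Fintype F] [CharP F p]
    (hF : Fintype.card F = p ^ e)
    {n : ℕ} (C : Submodule F (Fin n → F))
    (hC : IsGaloisLCD p k C) :
    galoisDual p k C ⊓ galoisDual p k (galoisDual p k C) = ⊥ :=
  galoisDual_isGaloisLCD_general p k F C hC
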